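/- arXiv:2409.08993 — 3 statements merged into one kernel-verified Lean document; each statement's English description precedes it below -/
import Mathlib

section
/- Mechanism 3 is a 2-approximation for the maximum cost: for every n ≥ 1 and every location profile x ∈ ℝⁿ, MC(x, f₃(x)) ≤ 2 · MC(x, a, b) for every feasible range (a,b), where f₃ denotes Mechanism 3. -/
open MeasureTheory

noncomputable section

/-- Shrink map: collapse interval [a,b] to the point a. -/
def shrink (a b t : ℝ) : ℝ :=
  if t ≤ a then t else if t ≤ b then a else t - (b - a)

/-- Cost of an agent at ideal location `t` under range `(a,b)`. -/
def cost (t a b : ℝ) : ℝ := |shrink a b t - shrink a b 0|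

/-- Social cost. -/
def SC (n : ℕ) (x : Fin n → ℝ) (a b : ℝ) : ℝ := ∑ i, cost (x i) a b

/-- Maximum cost. -/
def MC (n : ℕ) (x : Fin n → ℝ) (a b : ℝ) : ℝ :=
  sSup (Set.range fun i => cost (x i) a b)

/-- Optimal social cost over feasible ranges. -/
def OPTSC (n : ℕ) (d : ℝ) (x : Fin n → ℝ) : ℝ :=
  sInf {v : ℝ | ∃ a b : ℝ, a ≤ b ∧ b - a ≤ d ∧ v = SC n x a b}

/-- Optimal maximum cost over feasible ranges. -/
def OPTMC (n : ℕ) (d : ℝ) (x : Fin n → ℝ) : ℝ :=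
  sInf {v : ℝ | ∃ a b : ℝ, a ≤ b ∧ b - a ≤ d ∧ v = MC n x a b}

open Classical in
/-- The set D(x) used by Mechanism 1. -/
def Dset (n : ℕ) (d : ℝ) (x : Fin n → ℝ) : Set ℝ :=
  {y : ℝ | (Finset.univ.filter fun i => y + d ≤ x i).card ≤
           (Finset.univ.filter fun i => x i ≤ y).card}

/-- Mechanism 1. -/
def mech1 (n : ℕ) (d : ℝ) (x : Fin n → ℝ) : ℝ × ℝ :=
  if 0 ≤ sInf (Dset n d x) then (0, d)
  else if sInf (Dset n d x) ≤ -d then (-d, 0)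
  else (sInf (Dset n d x), sInf (Dset n d x) + d)

/-- Leftmost agent location. -/
def xleft (n : ℕ) (x : Fin n → ℝ) : ℝ := sInf (Set.range x)

/-- Rightmost agent location. -/
def xright (n : ℕ) (x : Fin n → ℝ) : ℝ := sSup (Set.range x)

/-- Mechanism 2. -/
def mech2 (n : ℕ) (d : ℝ) (x : Fin n → ℝ) : ℝ × ℝ :=
  if 0 ≤ xleft n x then (0, d)
  else if xleft n x ≤ -d then (-d, 0)
  else (xleft n x, xleft n x + d)

/-- Mechanism 3. -/
def mech3 (n : ℕ) (d : ℝ) (x : Fin n → ℝ) : ℝ × ℝ :=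
  (min (xleft n x) 0, min (xleft n x) 0 + d)

/-- The profile where agents in `S` report `x'` and all others report `x`. -/
def misreport (n : ℕ) (S : Finset (Fin n)) (x x' : Fin n → ℝ) : Fin n → ℝ :=
  fun j => if j ∈ S then x' j else x j


lemma shrink_le' (a b t : ℝ) (hab : a ≤ b) : shrink a b t ≤ t := by
  unfold shrink; split_ifs <;> linarith

lemma le_shrink' (a b t : ℝ) (hab : a ≤ b) : t - (b - a) ≤ shrink a b t := by
  unfold shrink; split_ifs <;> linarith

lemma cost_lower (a b t : ℝ) (hab : a ≤ b) : |t| - (b - a) ≤ cost t a b := by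
  have h1 := shrink_le' a b t hab
  have h2 := le_shrink' a b t hab
  have h3 := shrink_le' a b 0 hab
  have h4 := le_shrink' a b 0 hab
  have h5 := le_abs_self (shrink a b t - shrink a b 0)
  have h6 := neg_abs_le (shrink a b t - shrink a b 0)
  unfold cost
  rcases abs_cases t with ⟨h, _⟩ | ⟨h, _⟩ <;> linarith

lemma cost_pair (a b t u : ℝ) (hab : a ≤ b) :
    (t - u) - (b - a) ≤ cost t a b + cost u a b := by
  have h1 := le_shrink' a b t hab
  have h2 := shrink_le' a b u hab
  have h5 := le_abs_self (shrink a b t - shrink a b 0)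
  have h6 := neg_le_abs (shrink a b u - shrink a b 0)
  unfold cost; linarith

theorem stmt12 (n : ℕ) (hn : 1 ≤ n) (d : ℝ) (hd : 0 < d) (x : Fin n → ℝ)
    (a b : ℝ) (hab : a ≤ b) (hba : b - a ≤ d) :
    MC n x (mech3 n d x).1 (mech3 n d x).2 ≤ 2 * MC n x a b := by
  haveI : Nonempty (Fin n) := ⟨⟨0, hn⟩⟩
  obtain ⟨i0, hi0⟩ := Finite.exists_min x
  have hxl : xleft n x = x i0 := le_antisymm
    (csInf_le (Set.finite_range x).bddBelow ⟨i0, rfl⟩)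
    (le_csInf (Set.range_nonempty x) (by rintro _ ⟨j, rfl⟩; exact hi0 j))
  set M := MC n x a b with hM
  have hMi : ∀ i, cost (x i) a b ≤ M := fun i =>
    le_csSup ((Set.finite_range _).bddAbove) ⟨i, rfl⟩
  have hM0 : 0 ≤ M := le_trans (abs_nonneg _) (hMi i0)
  have key1a : ∀ i : Fin n, x i - (b - a) ≤ M := by
    intro i
    have h1 := cost_lower a b (x i) hab
    have h2 := le_abs_self (x i)
    have := hMi i; linarith
  have key1b : ∀ i : Fin n, -(x i) - (b - a) ≤ M := by
    intro i
    have h1 := cost_lower a b (x i) hab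
    have h2 := neg_le_abs (x i)
    have := hMi i; linarith
  have key2 : ∀ i : Fin n, x i - x i0 - (b - a) ≤ 2 * M := by
    intro i
    have h1 := cost_pair a b (x i) (x i0) hab
    have h2 := hMi i; have h3 := hMi i0; linarith
  have hgoal : ∀ i : Fin n,
      cost (x i) (min (xleft n x) 0) (min (xleft n x) 0 + d) ≤ 2 * M := by
    intro i
    have hF1 : x i0 ≤ x i := hi0 i
    have hk1a := key1a i
    have hk1b := key1b i
    have hk1a0 := key1a i0
    have hk1b0 := key1b i0
    have hk2 := key2 i
    rcases min_cases (xleft n x) 0 with ⟨hme, hle⟩ | ⟨hme, hle⟩ <;>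
      rw [hme] <;> unfold cost shrink <;> split_ifs <;>
      · rw [abs_le]; constructor <;> linarith
  show MC n x (min (xleft n x) 0) (min (xleft n x) 0 + d) ≤ 2 * M
  exact csSup_le (Set.range_nonempty _) (by rintro v ⟨i, rfl⟩; exact hgoal i)
end
end

section
/- No deterministic strategyproof mechanism has an approximation ratio less than 2 for the maximum cost: for every n ≥ 2, every d > 0, every deterministic mechanism f that always outputs a feasible range and is strategyproof, and every real r < 2, there exists a location profile x ∈ ℝⁿ with MC(x, f(x)) > r · OPT_MC(x). -/
open MeasureTheory

noncomputable section

lemma cost_nonneg (t a b : ℝ) : 0 ≤ cost t a b := abs_nonneg _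

lemma cost_zero (a b : ℝ) : cost 0 a b = 0 := by simp [cost]

lemma costEval1 {t a b : ℝ} (ht : t ≤ a) (h0 : 0 ≤ a) : cost t a b = |t| := by
  unfold cost shrink
  split_ifs <;> simp_all <;> linarith

lemma costEval2 {t a b : ℝ} (ht : t ≤ a) (ha : ¬ 0 ≤ a) (hb : 0 ≤ b) :
    cost t a b = |t - a| := by
  unfold cost shrink
  split_ifs <;> first | rfl | (exfalso; linarith)

lemma costEval3 {t a b : ℝ} (ha : ¬ t ≤ a) (hb : ¬ t ≤ b) (ha0 : ¬ 0 ≤ a) (hb0 : 0 ≤ b) :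
    cost t a b = |t - b| := by
  unfold cost shrink
  split_ifs <;> first | (exfalso; linarith) | (congr 1; ring)

lemma costEval4 {t a b : ℝ} (ha : ¬ t ≤ a) (hb : ¬ t ≤ b) (ha0 : ¬ 0 ≤ a) (hb0 : ¬ 0 ≤ b) :
    cost t a b = |t| := by
  unfold cost shrink
  split_ifs <;> first | (exfalso; linarith) | (congr 1; ring)

lemma cost_zero_contain {A a b : ℝ} (hA : A < 0) (h : cost A a b = 0) :
    a ≤ A ∧ 0 ≤ b := by
  rw [cost, abs_eq_zero, sub_eq_zero] at h
  unfold shrink at h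
  split_ifs at h <;> exact ⟨by linarith, by linarith⟩

lemma le_MC {n : ℕ} (x : Fin n → ℝ) (a b : ℝ) (i : Fin n) :
    cost (x i) a b ≤ MC n x a b :=
  le_csSup (Set.finite_range _).bddAbove ⟨i, rfl⟩

lemma MC_le {n : ℕ} (hn : 0 < n) (x : Fin n → ℝ) (a b v : ℝ)
    (h : ∀ i, cost (x i) a b ≤ v) : MC n x a b ≤ v := by
  have : Nonempty (Fin n) := ⟨⟨0, hn⟩⟩
  exact csSup_le (Set.range_nonempty _) (by rintro w ⟨i, rfl⟩; exact h i)

lemma MC_nonneg {n : ℕ} (hn : 0 < n) (x : Fin n → ℝ) (a b : ℝ) :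
    0 ≤ MC n x a b :=
  le_trans (cost_nonneg (x ⟨0, hn⟩) a b) (le_MC x a b ⟨0, hn⟩)

lemma OPTMC_bddBelow {n : ℕ} (hn : 0 < n) (d : ℝ) (x : Fin n → ℝ) :
    BddBelow {v : ℝ | ∃ a b : ℝ, a ≤ b ∧ b - a ≤ d ∧ v = MC n x a b} := by
  refine ⟨0, ?_⟩
  rintro v ⟨a, b, _, _, rfl⟩
  exact MC_nonneg hn x a b

lemma OPTMC_nonneg {n : ℕ} (hn : 0 < n) (d : ℝ) (hd : 0 ≤ d) (x : Fin n → ℝ) :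
    0 ≤ OPTMC n d x := by
  refine le_csInf ⟨MC n x 0 0, 0, 0, le_refl 0, by linarith, rfl⟩ ?_
  rintro v ⟨a, b, _, _, rfl⟩
  exact MC_nonneg hn x a b

lemma OPTMC_le {n : ℕ} (hn : 0 < n) (d : ℝ) (x : Fin n → ℝ) {a b : ℝ}
    (h1 : a ≤ b) (h2 : b - a ≤ d) : OPTMC n d x ≤ MC n x a b :=
  csInf_le (OPTMC_bddBelow hn d x) ⟨a, b, h1, h2, rfl⟩

lemma final_glue {r MCv OPTv c : ℝ} (hr : r < 2) (hc : 0 < c)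
    (hO1 : 0 ≤ OPTv) (hO2 : 2 * OPTv ≤ c) (hM : c ≤ MCv) : r * OPTv < MCv := by
  rcases le_or_gt r 0 with h | h
  · have : r * OPTv ≤ 0 := mul_nonpos_of_nonpos_of_nonneg h hO1
    linarith
  · nlinarith

theorem stmt13 (n : ℕ) (hn : 2 ≤ n) (d : ℝ) (hd : 0 < d)
    (f : (Fin n → ℝ) → ℝ × ℝ)
    (hfeas : ∀ x : Fin n → ℝ, (f x).1 ≤ (f x).2 ∧ (f x).2 - (f x).1 ≤ d)
    (hsp : ∀ (x : Fin n → ℝ) (i : Fin n) (xi' : ℝ),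
      cost (x i) (f x).1 (f x).2 ≤
        cost (x i) (f (Function.update x i xi')).1 (f (Function.update x i xi')).2)
    (r : ℝ) (hr : r < 2) :
    ∃ x : Fin n → ℝ, r * OPTMC n d x < MC n x (f x).1 (f x).2 := by
  have h0 : 0 < n := by omega
  have h1 : 1 < n := by omega
  set i0 : Fin n := ⟨0, h0⟩ with hi0
  set i1 : Fin n := ⟨1, h1⟩ with hi1
  have hne : i1 ≠ i0 := Fin.ne_of_val_ne (by norm_num)
  set y1 : Fin n → ℝ := fun i => if i = i0 then d else if i = i1 then -d/2 else 0 with hy1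
  have hy1i0 : y1 i0 = d := by simp [hy1]
  have hy1i1 : y1 i1 = -d/2 := by simp [hy1, hne]
  obtain ⟨hab1, hlen1⟩ := hfeas y1
  set A := (f y1).1 with hA
  set B := (f y1).2 with hB
  -- OPT(y1) ≤ d/4
  have hOPT1 : OPTMC n d y1 ≤ d/4 := by
    refine le_trans (OPTMC_le h0 d y1 (a := -d/4) (b := 3*d/4) (by linarith) (by linarith)) ?_
    refine MC_le h0 y1 _ _ _ ?_
    intro i
    by_cases hii0 : i = i0
    · rw [hii0, hy1i0, costEval3 (by linarith) (by linarith) (by linarith) (by linarith)]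
      rw [abs_of_nonneg (by linarith)]; linarith
    · by_cases hii1 : i = i1
      · rw [hii1, hy1i1, costEval2 (by linarith) (by linarith) (by linarith)]
        rw [abs_of_nonpos (by linarith)]; linarith
      · have : y1 i = 0 := by simp [hy1, hii0, hii1]
        rw [this, cost_zero]; linarith
  by_cases hA0 : 0 ≤ A
  · -- case (i): interval entirely right of 0; agent at -d/2 pays d/2
    refine ⟨y1, ?_⟩
    have hcost : cost (y1 i1) A B = d/2 := by
      rw [hy1i1, costEval1 (by linarith) hA0, abs_of_nonpos (by linarith)]; ring
    have hM : d/2 ≤ MC n y1 (f y1).1 (f y1).2 := by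
      rw [← hcost]; exact le_MC y1 A B i1
    exact final_glue hr (by linarith) (OPTMC_nonneg h0 d hd.le y1) (by linarith) hM
  · by_cases hB0 : 0 < B
    · -- case (iii): A < 0 < B; move agent 2 to A
      push_neg at hA0
      have hAd : -d < A := by linarith
      set y2 : Fin n → ℝ := Function.update y1 i1 A with hy2
      have hy2i0 : y2 i0 = d := by
        rw [hy2, Function.update_of_ne (Ne.symm hne), hy1i0]
      have hy2i1 : y2 i1 = A := by rw [hy2, Function.update_self]
      have hmis : Function.update y2 i1 (-d/2) = y1 := by
        funext j
        by_cases hj : j = i1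
        · rw [hj, Function.update_self, hy1i1]
        · rw [Function.update_of_ne hj, hy2, Function.update_of_ne hj]
      have hsp' := hsp y2 i1 (-d/2)
      rw [hmis, hy2i1] at hsp'
      have hcA : cost A A B = 0 := by
        rw [costEval2 (le_refl A) (by linarith) (by linarith)]
        simp
      rw [← hA, ← hB, hcA] at hsp'
      have hc0 : cost A (f y2).1 (f y2).2 = 0 :=
        le_antisymm hsp' (cost_nonneg _ _ _)
      obtain ⟨hcon1, hcon2⟩ := cost_zero_contain hA0 hc0
      obtain ⟨hab2, hlen2⟩ := hfeas y2
      refine ⟨y2, ?_⟩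
      -- MC(y2) ≥ cost of agent i0 at d ≥ -A
      have hcostd : cost (y2 i0) (f y2).1 (f y2).2 = d - (f y2).2 := by
        rw [hy2i0, costEval3 (by linarith) (by linarith) (by linarith) hcon2]
        rw [abs_of_nonneg (by linarith)]
      have hM : -A ≤ MC n y2 (f y2).1 (f y2).2 := by
        refine le_trans ?_ (le_MC y2 _ _ i0)
        rw [hcostd]; linarith
      -- OPT(y2) ≤ -A/2 using range (A/2, A/2 + d)
      have hOPT2 : OPTMC n d y2 ≤ -A/2 := by
        refine le_trans (OPTMC_le h0 d y2 (a := A/2) (b := A/2 + d) (by linarith) (by linarith)) ?_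
        refine MC_le h0 y2 _ _ _ ?_
        intro i
        by_cases hii0 : i = i0
        · rw [hii0, hy2i0, costEval3 (by linarith) (by linarith) (by linarith) (by linarith)]
          rw [abs_of_nonneg (by linarith)]; linarith
        · by_cases hii1 : i = i1
          · rw [hii1, hy2i1, costEval2 (by linarith) (by linarith) (by linarith)]
            rw [abs_of_nonpos (by linarith)]; linarith
          · have : y2 i = 0 := by
              rw [hy2, Function.update_of_ne hii1]; simp [hy1, hii0, hii1]
            rw [this, cost_zero]; linarith
      exact final_glue hr (by linarith) (OPTMC_nonneg h0 d hd.le y2) (by linarith) hM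
    · -- case (ii): B ≤ 0 (and A < 0): agent at d pays ≥ d
      push_neg at hA0 hB0
      refine ⟨y1, ?_⟩
      have hM : d/2 ≤ MC n y1 (f y1).1 (f y1).2 := by
        refine le_trans ?_ (le_MC y1 _ _ i0)
        rw [hy1i0, ← hA, ← hB]
        by_cases hB0' : 0 ≤ B
        · rw [costEval3 (by linarith) (by linarith) (by linarith) hB0']
          rw [abs_of_nonneg (by linarith)]; linarith
        · rw [costEval4 (by linarith) (by linarith) (by linarith) hB0']
          rw [abs_of_nonneg (by linarith)]; linarith
      exact final_glue hr (by linarith) (OPTMC_nonneg h0 d hd.le y1) (by linarith) hM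
end
end

section
/- The approximation analysis of Mechanism 3 for the maximum cost is tight: for n = 2 and any d > 0, the profile x = (−d, d) satisfies MC(x, f₃(x)) = d, while the feasible range (−d/2, d/2) achieves MC(x, −d/2, d/2) = d/2 and minimizes the maximum cost over all feasible ranges; hence MC(x, f₃(x)) = 2 · OPT_MC(x), where f₃ denotes Mechanism 3. -/
open MeasureTheory

noncomputable section

/-! A range of length at most `d` shortens the distance `2d` between the agents at `-d` and `d`
by at most `d`, and their costs add up to what is left, so one of them pays at least `d / 2`;
the centred range `(-d/2, d/2)` attains this. Mechanism 3 instead places the range at `(-d, 0)`,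
where the agent at `d` pays `d`. -/

section Shrink

variable {a b t : ℝ}

lemma shrink_of_le (ht : t ≤ a) : shrink a b t = t := if_pos ht

lemma shrink_of_mem_Icc (ht : t ∈ Set.Icc a b) : shrink a b t = a := by
  rcases eq_or_lt_of_le ht.1 with rfl | hat
  · exact if_pos le_rfl
  · rw [shrink, if_neg (not_le.2 hat), if_pos ht.2]

lemma shrink_of_ge (hab : a ≤ b) (ht : b ≤ t) : shrink a b t = t - (b - a) := by
  unfold shrink; split_ifs <;> linarith

lemma shrink_mono : Monotone (shrink a b) := by
  intro s t hst
  unfold shrink; split_ifs <;> linarith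

lemma shrink_le_self (hab : a ≤ b) : shrink a b t ≤ t := by
  unfold shrink; split_ifs <;> linarith

lemma sub_le_shrink (hab : a ≤ b) : t - (b - a) ≤ shrink a b t := by
  unfold shrink; split_ifs <;> linarith

end Shrink

section Cost

variable {a b t : ℝ}

/-- When the range contains the facility, an agent's cost is its distance to the range. -/
lemma cost_of_le_left (ha : a ≤ 0) (hb : 0 ≤ b) (ht : t ≤ a) : cost t a b = a - t := by
  rw [cost, shrink_of_le ht, shrink_of_mem_Icc ⟨ha, hb⟩, abs_of_nonpos (by linarith)]
  ring

lemma cost_of_ge_right (ha : a ≤ 0) (hb : 0 ≤ b) (ht : b ≤ t) : cost t a b = t - b := by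
  rw [cost, shrink_of_ge (ha.trans hb) ht, shrink_of_mem_Icc ⟨ha, hb⟩, abs_of_nonneg (by linarith)]
  ring

lemma sub_sub_le_cost_add_cost {p q : ℝ} (hp : p ≤ 0) (hq : 0 ≤ q) (hab : a ≤ b) :
    q - p - (b - a) ≤ cost p a b + cost q a b := by
  have hp0 := shrink_mono (a := a) (b := b) hp
  have hq0 := shrink_mono (a := a) (b := b) hq
  rw [cost, cost, abs_of_nonpos (by linarith), abs_of_nonneg (by linarith)]
  linarith [shrink_le_self (t := p) hab, sub_le_shrink (t := q) hab]

end Cost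

lemma MC_pair (p q a b : ℝ) : MC 2 ![p, q] a b = max (cost p a b) (cost q a b) := by
  change sSup (Set.range ((fun t => cost t a b) ∘ ![p, q])) = _
  rw [Set.range_comp, Matrix.range_cons_cons_empty, Set.image_pair, csSup_pair]

lemma half_sub_le_MC_pair {p q a b : ℝ} (hp : p ≤ 0) (hq : 0 ≤ q) (hab : a ≤ b) :
    (q - p - (b - a)) / 2 ≤ MC 2 ![p, q] a b := by
  rw [MC_pair]
  linarith [sub_sub_le_cost_add_cost (a := a) (b := b) hp hq hab,
    le_max_left (cost p a b) (cost q a b), le_max_right (cost p a b) (cost q a b)]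

lemma xleft_pair (p q : ℝ) : xleft 2 ![p, q] = min p q := by
  rw [xleft, Matrix.range_cons_cons_empty, csInf_pair]

theorem stmt14 (d : ℝ) (hd : 0 < d) :
    MC 2 ![-d, d] (mech3 2 d ![-d, d]).1 (mech3 2 d ![-d, d]).2 = d ∧
    MC 2 ![-d, d] (-(d / 2)) (d / 2) = d / 2 ∧
    (∀ a b : ℝ, a ≤ b → b - a ≤ d → MC 2 ![-d, d] (-(d / 2)) (d / 2) ≤ MC 2 ![-d, d] a b) ∧
    MC 2 ![-d, d] (mech3 2 d ![-d, d]).1 (mech3 2 d ![-d, d]).2 = 2 * OPTMC 2 d ![-d, d] := by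
  have hmech : mech3 2 d ![-d, d] = (-d, 0) := by
    rw [mech3, xleft_pair, min_eq_left (show -d ≤ d by linarith),
      min_eq_left (show -d ≤ 0 by linarith), neg_add_cancel]
  have hmech_MC : MC 2 ![-d, d] (-d) 0 = d := by
    rw [MC_pair, cost_of_le_left (by linarith) le_rfl le_rfl,
      cost_of_ge_right (by linarith) le_rfl hd.le, sub_self, sub_zero, max_eq_right hd.le]
  have hmid_MC : MC 2 ![-d, d] (-(d / 2)) (d / 2) = d / 2 := by
    rw [MC_pair, cost_of_le_left (by linarith) (by linarith) (by linarith),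
      cost_of_ge_right (by linarith) (by linarith) (by linarith)]
    rw [show -(d / 2) - -d = d - d / 2 by ring, max_self]
    ring
  have hlower : ∀ a b : ℝ, a ≤ b → b - a ≤ d → d / 2 ≤ MC 2 ![-d, d] a b := fun a b hab hba =>
    le_trans (by linarith) (half_sub_le_MC_pair (by linarith) hd.le hab)
  have hopt : OPTMC 2 d ![-d, d] = d / 2 :=
    IsLeast.csInf_eq ⟨⟨-(d / 2), d / 2, by linarith, by linarith, hmid_MC.symm⟩,
      by rintro _ ⟨a, b, hab, hba, rfl⟩; exact hlower a b hab hba⟩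
  rw [hmech, hmech_MC, hopt, hmid_MC]
  exact ⟨rfl, rfl, fun a b hab hba => hmid_MC ▸ hlower a b hab hba, by ring⟩
end
end
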